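/- arXiv:1707.07505 — 2 statements merged into one kernel-verified Lean document; each statement's English description precedes it below -/
import Mathlib

section
/- Let R be a Prüfer domain, let ⋆ be a stable (semi)star operation on R, let P be a prime ideal of R, and let I be a fractional ideal of R. If P ∈ PsSpec^⋆(R), then I^⋆ ⊆ (IR_P)^{v_{R_P}}; if P ∈ QSpec^⋆(R), then I^⋆ ⊆ IR_P. -/
open Pointwise

section Defs

variable {R : Type*} (K : Type*) [CommRing R] [IsDomain R] [Field K] [Algebra R K]
  [IsFractionRing R K]

/-- A function `f` on the `R`-submodules of the quotient field `K` is a semistar operation if it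
is extensive, idempotent, monotone and commutes with scaling by elements of `K`. -/
def IsSemistarOperation (f : Submodule R K → Submodule R K) : Prop :=
  (∀ I : Submodule R K, I ≤ f I) ∧
  (∀ I : Submodule R K, f (f I) = f I) ∧
  (∀ I J : Submodule R K, I ≤ J → f I ≤ f J) ∧
  (∀ (x : K) (I : Submodule R K), f (x • I) = x • f I)

/-- A semistar operation is stable if it distributes over finite intersections. -/
def IsStableOperation (f : Submodule R K → Submodule R K) : Prop :=
  ∀ I J : Submodule R K, f (I ⊓ J) = f I ⊓ f J

/-- An ideal of `R`, viewed as an `R`-submodule of the quotient field `K`. -/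
def idealToK (I : Ideal R) : Submodule R K :=
  Submodule.map (Algebra.linearMap R K) I

/-- A Prüfer domain is an integral domain in which every nonzero finitely generated ideal is
invertible (as a fractional ideal, i.e. as a submodule of the quotient field). -/
def IsPruferDomain : Prop :=
  ∀ I : Ideal R, I ≠ ⊥ → I.FG → ∃ J : Submodule R K, idealToK K I * J = 1

/-- The localization `R_P` of `R` at the prime `P`, viewed as an `R`-submodule of the quotient
field `K`. -/
noncomputable def locSub (P : Ideal R) (hP : P.IsPrime) : Submodule R K :=
  haveI := hP
  Subalgebra.toSubmodule
    (Localization.subalgebra K P.primeCompl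
      (fun x hx => mem_nonZeroDivisors_of_ne_zero (fun h0 => hx (h0 ▸ P.zero_mem))))

/-- The `v`-operation of the valuation ring `R_P`, applied to the `R_P`-submodule of `K`
generated by (the image of) `I`: it sends `I` to `(R_P : (R_P : IR_P))`. -/
noncomputable def vOp (P : Ideal R) (hP : P.IsPrime) (I : Submodule R K) : Submodule R K :=
  locSub K P hP / (locSub K P hP / (I * locSub K P hP))

/-- The quasi-spectrum of a (stable) semistar operation: the set of primes `P` such that
`P^⋆ ∩ R = P`. -/
def QSpec (f : Submodule R K → Submodule R K) : Set (Ideal R) :=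
  {P | P.IsPrime ∧ f (idealToK K P) ⊓ 1 = idealToK K P}

/-- The pseudo-spectrum of a stable semistar operation: the set of primes `P` such that
`P^⋆ ∩ R = R` and `L^⋆ ∩ R = L` for some `P`-primary ideal `L`. -/
def PsSpec (f : Submodule R K → Submodule R K) : Set (Ideal R) :=
  {P | P.IsPrime ∧ f (idealToK K P) ⊓ 1 = 1 ∧
    ∃ L : Ideal R, L.IsPrimary ∧ L.radical = P ∧ f (idealToK K L) ⊓ 1 = idealToK K L}

/-- The normalized stable version of a stable semistar operation `f`:
`I ↦ ⋂ {IR_P : P ∈ QSpec} ∩ ⋂ {(IR_P)^{v_{R_P}} : P ∈ PsSpec}`. -/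
noncomputable def normStable (f : Submodule R K → Submodule R K) (I : Submodule R K) :
    Submodule R K :=
  (⨅ P : QSpec K f, I * locSub K P.1 P.2.1) ⊓
    ⨅ P : PsSpec K f, vOp K P.1 P.2.1 I

end Defs

section Aux

variable {R K : Type*} [CommRing R] [IsDomain R] [Field K] [Algebra R K] [IsFractionRing R K]

lemma mem_locSub_iff {P : Ideal R} {hP : P.IsPrime} {z : K} :
    z ∈ locSub K P hP ↔ ∃ a s : R, s ∉ P ∧ z * algebraMap R K s = algebraMap R K a := by
  unfold locSub
  rw [Subalgebra.mem_toSubmodule]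
  unfold Localization.subalgebra
  rw [Subalgebra.copy_eq,
    Localization.mem_range_mapToFractionRing_iff]
  constructor
  · rintro ⟨a, s, hs, rfl⟩
    exact ⟨a, s, hs, IsLocalization.mk'_spec K a ⟨s, _⟩⟩
  · rintro ⟨a, s, hs, h⟩
    exact ⟨a, s, hs, IsLocalization.eq_mk'_iff_mul_eq.2 h⟩

lemma mem_ptsmul {a : K} {S : Submodule R K} {t : K} :
    t ∈ a • S ↔ ∃ w ∈ S, a * w = t := by
  rw [← SetLike.mem_coe, Submodule.coe_pointwise_smul]
  simp [Set.mem_smul_set, smul_eq_mul]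

lemma colon_step {L : Ideal R} (hL : L ≠ ⊤) {a : R} (ha : ∃ n, a ^ n ∈ L) :
    ∃ r : R, r ∉ L ∧ a * r ∈ L := by
  by_contra hcon
  push_neg at hcon
  have key : ∀ r : R, a * r ∈ L → r ∈ L := by
    intro r h
    by_contra hr
    exact (hcon r hr) h
  have hone : ∀ n : ℕ, a ^ n ∈ L → (1 : R) ∈ L := by
    intro n
    induction n with
    | zero => intro h; simpa using h
    | succ k ih =>
      intro h
      rw [pow_succ] at h
      exact ih (key _ (by rwa [mul_comm] at h))
  obtain ⟨n, hn⟩ := ha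
  exact hL ((Ideal.eq_top_iff_one L).2 (hone n hn))

lemma locSub_dichotomy (hR : IsPruferDomain (R := R) K) {P : Ideal R} (hP : P.IsPrime)
    {z : K} (hz : z ≠ 0) : z ∈ locSub K P hP ∨ z⁻¹ ∈ locSub K P hP := by
  obtain ⟨a, b, hb, hzk⟩ := IsFractionRing.div_surjective (A := R) z
  have hbne : b ≠ 0 := nonZeroDivisors.ne_zero hb
  have hbK : algebraMap R K b ≠ 0 :=
    (map_ne_zero_iff _ (IsFractionRing.injective R K)).2 hbne
  have haK : algebraMap R K a ≠ 0 := by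
    intro h
    apply hz
    rw [← hzk, h, zero_div]
  have hane : a ≠ 0 := fun h => haK (by rw [h, map_zero])
  set M := Ideal.span ({a, b} : Set R) with hM
  have hMne : M ≠ ⊥ := by
    intro h
    have haM : a ∈ M := Ideal.subset_span (Set.mem_insert _ _)
    rw [h] at haM
    exact hane ((Submodule.mem_bot R).1 haM)
  obtain ⟨J, hJ⟩ := hR M hMne (Submodule.fg_span (Set.toFinite _))
  have hsplit : idealToK K M =
      Submodule.span R {algebraMap R K a} ⊔ Submodule.span R {algebraMap R K b} := by
    rw [hM]
    unfold idealToK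
    rw [Ideal.span, Submodule.map_span, Set.image_insert_eq, Set.image_singleton,
      Submodule.span_insert]
    simp [Algebra.linearMap_apply]
  rw [hsplit, Submodule.sup_mul] at hJ
  have hle1 : Submodule.span R {algebraMap R K a} * J ≤ 1 := by
    rw [← hJ]; exact le_sup_left
  have hle2 : Submodule.span R {algebraMap R K b} * J ≤ 1 := by
    rw [← hJ]; exact le_sup_right
  have h1mem : (1 : K) ∈ Submodule.span R {algebraMap R K a} * J ⊔
      Submodule.span R {algebraMap R K b} * J := by
    rw [hJ]; exact Submodule.mem_one.2 ⟨1, map_one _⟩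
  obtain ⟨c, hc, d, hd, hcd⟩ := Submodule.mem_sup.1 h1mem
  obtain ⟨c', hc'⟩ := Submodule.mem_one.1 (hle1 hc)
  obtain ⟨d', hd'⟩ := Submodule.mem_one.1 (hle2 hd)
  have hsum : c' + d' = 1 := by
    apply IsFractionRing.injective R K
    rw [map_add, hc', hd', hcd, map_one]
  have hnot : c' ∉ P ∨ d' ∉ P := by
    by_contra h
    push_neg at h
    exact hP.ne_top ((Ideal.eq_top_iff_one P).2 (hsum ▸ P.add_mem h.1 h.2))
  rcases hnot with hcP | hdP
  · right
    obtain ⟨w, hw, hcw⟩ := Submodule.mem_span_singleton_mul.1 hc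
    obtain ⟨e, he⟩ := Submodule.mem_one.1
      (hle2 (Submodule.mem_span_singleton_mul.2 ⟨w, hw, rfl⟩))
    refine mem_locSub_iff.2 ⟨e, c', hcP, ?_⟩
    rw [he, hc', ← hcw, ← hzk]
    field_simp
  · left
    obtain ⟨w, hw, hdw⟩ := Submodule.mem_span_singleton_mul.1 hd
    obtain ⟨e, he⟩ := Submodule.mem_one.1
      (hle1 (Submodule.mem_span_singleton_mul.2 ⟨w, hw, rfl⟩))
    refine mem_locSub_iff.2 ⟨e, d', hdP, ?_⟩
    rw [he, hd', ← hdw, ← hzk]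
    field_simp

end Aux



/-- Let `R` be a Prüfer domain, `⋆` a stable (semi)star operation, `P` a prime and `I` a
fractional ideal of `R`. If `P ∈ PsSpec^⋆(R)` then `I^⋆ ⊆ (IR_P)^{v_{R_P}}`; if
`P ∈ QSpec^⋆(R)` then `I^⋆ ⊆ IR_P`. -/
theorem star_le_of_mem_spectra {R K : Type*} [CommRing R] [IsDomain R] [Field K] [Algebra R K]
    [IsFractionRing R K]
    (hR : IsPruferDomain (R := R) K)
    (f : Submodule R K → Submodule R K) (hf : IsSemistarOperation K f)
    (hstable : IsStableOperation K f) (hsemi : f 1 = 1)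
    (P : Ideal R) (hP : P.IsPrime)
    (I : Submodule R K)
    (hI : ∃ d : R, d ≠ 0 ∧ ∀ x ∈ I, algebraMap R K d * x ∈ (1 : Submodule R K)) :
    (P ∈ PsSpec K f → f I ≤ vOp K P hP I) ∧ (P ∈ QSpec K f → f I ≤ I * locSub K P hP) := by
  obtain ⟨hext, hidem, hmono, hsmul⟩ := hf
  clear hI
  have hfJ : ∀ x : K, x ≠ 0 → x ∈ f I → (1 : K) ∈ f (x⁻¹ • I ⊓ 1) := by
    intro x hx hxf
    rw [hstable, hsmul, hsemi]
    exact Submodule.mem_inf.2 ⟨mem_ptsmul.2 ⟨x, hxf, inv_mul_cancel₀ hx⟩,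
      Submodule.mem_one.2 ⟨1, map_one _⟩⟩
  have honeK : (1 : K) ∈ (1 : Submodule R K) := Submodule.mem_one.2 ⟨1, map_one _⟩
  have h1loc : (1 : K) ∈ locSub K P hP :=
    mem_locSub_iff.2 ⟨1, 1, fun h => hP.ne_top ((Ideal.eq_top_iff_one P).2 h), by rw [one_mul]⟩
  constructor
  · rintro ⟨hprime, hdense, L, hLprim, hLrad, hLstar⟩
    obtain ⟨hLne, hLprim2⟩ := Ideal.isPrimary_iff.1 hLprim
    intro x hx
    unfold vOp
    rw [Submodule.mem_div_iff_forall_mul_mem]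
    intro y hy
    rw [Submodule.mem_div_iff_forall_mul_mem] at hy
    by_cases hxy : x * y ∈ locSub K P hP
    · exact hxy
    exfalso
    have hxne : x ≠ 0 := by
      rintro rfl
      exact hxy (by simpa using (locSub K P hP).zero_mem)
    have hyne : y ≠ 0 := by
      rintro rfl
      exact hxy (by simpa using (locSub K P hP).zero_mem)
    have hxyne : x * y ≠ 0 := mul_ne_zero hxne hyne
    have hu : (x * y)⁻¹ ∈ locSub K P hP := by
      rcases locSub_dichotomy hR hP hxyne with h | h
      · exact absurd h hxy
      · exact h
    obtain ⟨a, s, hs, hus⟩ := mem_locSub_iff.1 hu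
    have haP : a ∈ P := by
      by_contra haP
      apply hxy
      refine mem_locSub_iff.2 ⟨s, a, haP, ?_⟩
      rw [← hus, ← mul_assoc, mul_inv_cancel₀ hxyne, one_mul]
    have hrad : ∃ n, a ^ n ∈ L := Ideal.mem_radical_iff.1 (hLrad ▸ haP)
    obtain ⟨r, hrL, harL⟩ := colon_step hLne hrad
    have h1 : (1 : K) ∈ f (x⁻¹ • I ⊓ 1) := hfJ x hxne hx
    have hclaim : ∀ t ∈ x⁻¹ • I ⊓ 1, algebraMap R K r * t ∈ idealToK K L := by
      intro t ht
      obtain ⟨ht1, ht2⟩ := Submodule.mem_inf.1 ht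
      obtain ⟨t', ht'⟩ := Submodule.mem_one.1 ht2
      obtain ⟨w, hwI, hwt⟩ := mem_ptsmul.1 ht1
      have hxtI : x * t ∈ I := by
        rw [← hwt, ← mul_assoc, mul_inv_cancel₀ hxne, one_mul]
        exact hwI
      have hxtloc : x * t ∈ I * locSub K P hP := by
        have h2 := Submodule.mul_mem_mul hxtI h1loc
        rwa [mul_one] at h2
      obtain ⟨e, q, hq, heq⟩ := mem_locSub_iff.1 (hy _ hxtloc)
      have hsK : algebraMap R K s = algebraMap R K a * (x * y) := by
        rw [← hus, mul_comm ((x * y)⁻¹) (algebraMap R K s), mul_assoc,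
          inv_mul_cancel₀ hxyne, mul_one]
      have hkey : s * (q * t') = a * e := by
        apply IsFractionRing.injective R K
        rw [map_mul, map_mul, map_mul, hsK, ← heq, ht']
        ring
      have hrtL : r * t' ∈ L := by
        have hm : r * t' * (s * q) ∈ L := by
          have h2 : r * t' * (s * q) = a * r * e := by
            rw [show r * t' * (s * q) = r * (s * (q * t')) by ring, hkey]
            ring
          rw [h2]
          exact L.mul_mem_right e harL
        rcases hLprim2 hm with h | h
        · exact h
        · rw [hLrad] at h
          rcases hP.mem_or_mem h with h | h
          · exact absurd h hs
          · exact absurd h hq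
      exact Submodule.mem_map.2 ⟨r * t', hrtL, by simp [Algebra.linearMap_apply, map_mul, ht']⟩
    have hrJ : algebraMap R K r • (x⁻¹ • I ⊓ 1) ≤ idealToK K L := by
      intro z hz
      obtain ⟨t, ht, hzt⟩ := mem_ptsmul.1 hz
      rw [← hzt]
      exact hclaim t ht
    have hmem : algebraMap R K r ∈ f (idealToK K L) ⊓ 1 := by
      refine Submodule.mem_inf.2 ⟨?_, Submodule.mem_one.2 ⟨r, rfl⟩⟩
      have h3 : algebraMap R K r ∈ f (algebraMap R K r • (x⁻¹ • I ⊓ 1)) := by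
        rw [hsmul]
        exact mem_ptsmul.2 ⟨1, h1, mul_one _⟩
      exact hmono _ _ hrJ h3
    rw [hLstar] at hmem
    obtain ⟨l, hl, hlr⟩ := hmem
    have hlreq : l = r := IsFractionRing.injective R K (by simpa using hlr)
    exact hrL (hlreq ▸ hl)
  · rintro ⟨hprime, hQeq⟩
    intro x hx
    by_cases hx0 : x = 0
    · rw [hx0]; exact zero_mem _
    have h1 : (1 : K) ∈ f (x⁻¹ • I ⊓ 1) := hfJ x hx0 hx
    have hnle : ¬x⁻¹ • I ⊓ 1 ≤ idealToK K P := by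
      intro hle
      have hmem : (1 : K) ∈ f (idealToK K P) ⊓ 1 :=
        Submodule.mem_inf.2 ⟨hmono _ _ hle h1, honeK⟩
      rw [hQeq] at hmem
      obtain ⟨p, hp, hp1⟩ := hmem
      have hpe : p = 1 := IsFractionRing.injective R K (by simpa using hp1)
      exact hprime.ne_top ((Ideal.eq_top_iff_one P).2 (hpe ▸ hp))
    obtain ⟨t, ht, htP⟩ := SetLike.not_le_iff_exists.1 hnle
    obtain ⟨ht1, ht2⟩ := Submodule.mem_inf.1 ht
    obtain ⟨t', ht'⟩ := Submodule.mem_one.1 ht2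
    have ht'P : t' ∉ P := fun h => htP ⟨t', h, by simpa using ht'⟩
    have ht'0 : t' ≠ 0 := fun h => ht'P (h ▸ P.zero_mem)
    have htK : t ≠ 0 := by
      rw [← ht']
      exact (map_ne_zero_iff _ (IsFractionRing.injective R K)).2 ht'0
    obtain ⟨w, hwI, hwt⟩ := mem_ptsmul.1 ht1
    have hxtI : x * t ∈ I := by
      rw [← hwt, ← mul_assoc, mul_inv_cancel₀ hx0, one_mul]
      exact hwI
    have hinv : t⁻¹ ∈ locSub K P hP :=
      mem_locSub_iff.2 ⟨1, t', ht'P, by rw [ht', map_one, inv_mul_cancel₀ htK]⟩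
    have hfin := Submodule.mul_mem_mul hxtI hinv
    rwa [mul_assoc, mul_inv_cancel₀ htK, mul_one] at hfin
end

section
/- Let R be a Prüfer domain and let ⋆ be a stable semistar operation on R, with normalized stable version ⋆̃. Then ⋆̃ is a stable semistar operation on R, and I^⋆ ⊆ I^⋆̃ for every R-submodule I of the quotient field K. -/
open Pointwise

section Lemmas

variable {R K : Type*} [CommRing R] [IsDomain R] [Field K] [Algebra R K] [IsFractionRing R K]

open Submodule

theorem mem_locSub {P : Ideal R} {hP : P.IsPrime} {x : K} :
    x ∈ locSub K P hP ↔ ∃ a s : R, s ∉ P ∧ x * algebraMap R K s = algebraMap R K a := by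
  constructor
  · intro hx
    rw [locSub, Subalgebra.mem_toSubmodule, Localization.subalgebra, Subalgebra.copy_eq, Localization.mem_range_mapToFractionRing_iff] at hx
    obtain ⟨a, s, hs, rfl⟩ := hx
    exact ⟨a, s, hs, IsLocalization.mk'_spec _ _ _⟩
  · rintro ⟨a, s, hs, hx⟩
    rw [locSub, Subalgebra.mem_toSubmodule, Localization.subalgebra, Subalgebra.copy_eq, Localization.mem_range_mapToFractionRing_iff]
    refine ⟨a, s, hs, ?_⟩
    have hs0 : algebraMap R K s ≠ 0 := by
      intro h0
      exact hs (by simpa using (IsFractionRing.injective R K (h0.trans (map_zero _).symm) ▸ P.zero_mem))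
    rw [IsLocalization.eq_mk'_iff_mul_eq]
    exact hx

theorem one_mem_locSub {P : Ideal R} {hP : P.IsPrime} : (1 : K) ∈ locSub K P hP :=
  (Localization.subalgebra K P.primeCompl _).one_mem

theorem mul_mem_locSub {P : Ideal R} {hP : P.IsPrime} {x y : K} (hx : x ∈ locSub K P hP)
    (hy : y ∈ locSub K P hP) : x * y ∈ locSub K P hP :=
  (Localization.subalgebra K P.primeCompl _).mul_mem hx hy

theorem algebraMap_mem_locSub {P : Ideal R} {hP : P.IsPrime} (r : R) :
    algebraMap R K r ∈ locSub K P hP :=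
  (Localization.subalgebra K P.primeCompl _).algebraMap_mem r

end Lemmas
section Lemmas2

variable {R K : Type*} [CommRing R] [IsDomain R] [Field K] [Algebra R K] [IsFractionRing R K]

open Submodule

theorem algebraMap_ne_zero {P : Ideal R} (hP : P.IsPrime) {s : R} (hs : s ∉ P) :
    algebraMap R K s ≠ 0 := by
  intro h0
  have : s = 0 := IsFractionRing.injective R K (by simpa using h0)
  exact hs (this ▸ P.zero_mem)

theorem inv_algebraMap_mem_locSub {P : Ideal R} (hP : P.IsPrime) {s : R} (hs : s ∉ P) :
    (algebraMap R K s)⁻¹ ∈ locSub K P hP := by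
  rw [mem_locSub]
  exact ⟨1, s, hs, by rw [inv_mul_cancel₀ (algebraMap_ne_zero hP hs), map_one]⟩

theorem mem_mul_locSub {P : Ideal R} {hP : P.IsPrime} {I : Submodule R K} {x : K} :
    x ∈ I * locSub K P hP ↔ ∃ s : R, s ∉ P ∧ algebraMap R K s * x ∈ I := by
  constructor
  · intro hx
    refine Submodule.mul_induction_on hx ?_ ?_
    · intro a ha u hu
      obtain ⟨r, s, hs, hu⟩ := mem_locSub.1 hu
      refine ⟨s, hs, ?_⟩
      have : algebraMap R K s * (a * u) = r • a := by
        rw [Algebra.smul_def, ← hu]; ring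
      rw [this]
      exact I.smul_mem r ha
    · rintro y z ⟨s, hs, hy⟩ ⟨t, ht, hz⟩
      refine ⟨s * t, fun h => (hP.mem_or_mem h).elim hs ht, ?_⟩
      have : algebraMap R K (s * t) * (y + z) =
          algebraMap R K t * (algebraMap R K s * y) + algebraMap R K s * (algebraMap R K t * z) := by
        rw [map_mul]; ring
      rw [this]
      exact I.add_mem (by simpa [Algebra.smul_def] using I.smul_mem t hy)
        (by simpa [Algebra.smul_def] using I.smul_mem s hz)
  · rintro ⟨s, hs, hsx⟩
    have : x = (algebraMap R K s * x) * (algebraMap R K s)⁻¹ := by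
      field_simp [algebraMap_ne_zero hP hs]
    rw [this]
    exact Submodule.mul_mem_mul hsx (inv_algebraMap_mem_locSub hP hs)

theorem le_mul_locSub {P : Ideal R} {hP : P.IsPrime} {I : Submodule R K} :
    I ≤ I * locSub K P hP := by
  intro a ha
  rw [mem_mul_locSub]
  exact ⟨1, hP.ne_top ∘ (Ideal.eq_top_iff_one P).2, by simpa using ha⟩

theorem locSub_mul_self {P : Ideal R} {hP : P.IsPrime} :
    locSub K P hP * locSub K P hP = locSub K P hP :=
  le_antisymm (Submodule.mul_le.2 fun _ hm _ hn => mul_mem_locSub hm hn) le_mul_locSub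

theorem mul_locSub_idem {P : Ideal R} {hP : P.IsPrime} {I : Submodule R K} :
    I * locSub K P hP * locSub K P hP = I * locSub K P hP := by
  rw [mul_assoc, locSub_mul_self]

theorem inf_mul_locSub {P : Ideal R} {hP : P.IsPrime} {I J : Submodule R K} :
    (I ⊓ J) * locSub K P hP = I * locSub K P hP ⊓ J * locSub K P hP := by
  refine le_antisymm (le_inf (mul_le_mul_left inf_le_left _)
    (mul_le_mul_left inf_le_right _)) ?_
  rintro x ⟨hxI, hxJ⟩
  obtain ⟨s, hs, hsI⟩ := mem_mul_locSub.1 hxI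
  obtain ⟨t, ht, htJ⟩ := mem_mul_locSub.1 hxJ
  rw [mem_mul_locSub]
  refine ⟨s * t, fun h => (hP.mem_or_mem h).elim hs ht, ?_, ?_⟩
  · have : algebraMap R K (s * t) * x = t • (algebraMap R K s * x) := by
      rw [map_mul, Algebra.smul_def]; ring
    rw [this]; exact I.smul_mem t hsI
  · have : algebraMap R K (s * t) * x = s • (algebraMap R K t * x) := by
      rw [map_mul, Algebra.smul_def]; ring
    rw [this]; exact J.smul_mem s htJ

end Lemmas2
section Lemmas3

variable {R K : Type*} [CommRing R] [IsDomain R] [Field K] [Algebra R K] [IsFractionRing R K]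

open Submodule

theorem mem_smulK {a x : K} {S : Submodule R K} : x ∈ a • S ↔ ∃ y ∈ S, a * y = x :=
  Iff.rfl

/-- Prüfer implies every localization is a valuation ring of `K`. -/
theorem valuation_locSub (hR : IsPruferDomain (R := R) K) {P : Ideal R} (hP : P.IsPrime)
    (z : K) (hz : z ≠ 0) : z ∈ locSub K P hP ∨ z⁻¹ ∈ locSub K P hP := by
  obtain ⟨a, b, hb, hab⟩ := IsFractionRing.div_surjective (A := R) z
  have hb0 : b ≠ 0 := nonZeroDivisors.ne_zero hb
  have hbK : algebraMap R K b ≠ 0 := fun h =>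
    hb0 (IsFractionRing.injective R K (by simpa using h))
  have ha0 : a ≠ 0 := by
    rintro rfl
    apply hz
    rw [← hab, map_zero, zero_div]
  have haK : algebraMap R K a ≠ 0 := fun h =>
    ha0 (IsFractionRing.injective R K (by simpa using h))
  obtain ⟨J, hJ⟩ := hR (Ideal.span {a, b}) (by
      simp only [ne_eq, Ideal.span_eq_bot]
      push_neg
      exact ⟨a, Set.mem_insert _ _, ha0⟩)
    (Submodule.fg_span ((Set.finite_singleton _).insert _))
  have hspan : idealToK K (Ideal.span {a, b}) =
      Submodule.span R {algebraMap R K a} ⊔ Submodule.span R {algebraMap R K b} := by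
    rw [idealToK, Ideal.span, Submodule.map_span, Set.image_insert_eq, Set.image_singleton,
      Submodule.span_insert]
    rfl
  have h1 : (1 : K) ∈ idealToK K (Ideal.span {a, b}) * J := hJ ▸ Submodule.one_le.1 le_rfl
  rw [hspan, Submodule.sup_mul, Submodule.span_singleton_mul, Submodule.span_singleton_mul,
    Submodule.mem_sup] at h1
  obtain ⟨p, hp, q, hq, hpq⟩ := h1
  obtain ⟨u, hu, hup⟩ := mem_smulK.1 hp
  obtain ⟨v, hv, hvq⟩ := mem_smulK.1 hq
  -- products of {a,b} with elements of J land in the image of R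
  have hprod : ∀ c : R, algebraMap R K c ∈ idealToK K (Ideal.span {a, b}) →
      ∀ w : K, w ∈ J → ∃ r : R, algebraMap R K r = algebraMap R K c * w := by
    intro c hc w hw
    have : algebraMap R K c * w ∈ (1 : Submodule R K) := hJ ▸ Submodule.mul_mem_mul hc hw
    rw [Submodule.one_eq_range] at this
    obtain ⟨r, hr⟩ := this
    exact ⟨r, hr⟩
  have hamem : algebraMap R K a ∈ idealToK K (Ideal.span {a, b}) :=
    ⟨a, Ideal.subset_span (Set.mem_insert _ _), rfl⟩
  have hbmem : algebraMap R K b ∈ idealToK K (Ideal.span {a, b}) :=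
    ⟨b, Ideal.subset_span (Set.mem_insert_of_mem _ rfl), rfl⟩
  obtain ⟨rau, hrau⟩ := hprod a hamem u hu
  obtain ⟨rav, hrav⟩ := hprod a hamem v hv
  obtain ⟨rbu, hrbu⟩ := hprod b hbmem u hu
  obtain ⟨rbv, hrbv⟩ := hprod b hbmem v hv
  have hsum : rau + rbv = 1 := by
    apply IsFractionRing.injective R K
    rw [map_add, map_one, hrau, hrbu] at *
    rw [hrau, hrbv]
    rw [hup, hvq, hpq]
  have hcase : rau ∉ P ∨ rbv ∉ P := by
    by_contra h
    push_neg at h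
    exact hP.ne_top (Ideal.eq_top_of_isUnit_mem _ (hsum ▸ P.add_mem h.1 h.2) isUnit_one)
  rcases hcase with h | h
  · right
    rw [mem_locSub]
    refine ⟨rbu, rau, h, ?_⟩
    rw [hrau, hrbu, ← hab]
    field_simp
  · left
    rw [mem_locSub]
    refine ⟨rav, rbv, h, ?_⟩
    rw [hrav, hrbv, ← hab]
    field_simp

end Lemmas3
section Lemmas4

variable {R K : Type*} [CommRing R] [IsDomain R] [Field K] [Algebra R K] [IsFractionRing R K]

open Submodule

/-- Submodules of `K` that are modules over the valuation ring `R_P` are totally ordered. -/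
theorem total_locSub (hR : IsPruferDomain (R := R) K) {P : Ideal R} (hP : P.IsPrime)
    {B C : Submodule R K} (hB : B * locSub K P hP = B) (hC : C * locSub K P hP = C) :
    B ≤ C ∨ C ≤ B := by
  by_cases h : B ≤ C
  · exact Or.inl h
  · right
    rw [SetLike.not_le_iff_exists] at h
    obtain ⟨b, hb, hbC⟩ := h
    intro c hc
    by_cases hc0 : c = 0
    · exact hc0 ▸ B.zero_mem
    have hb0 : b ≠ 0 := fun h0 => hbC (h0 ▸ C.zero_mem)
    rcases valuation_locSub hR hP (b * c⁻¹) (by simp [hb0, hc0]) with h | h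
    · exfalso
      apply hbC
      have : c * (b * c⁻¹) ∈ C * locSub K P hP := Submodule.mul_mem_mul hc h
      rw [hC] at this
      have hcb : c * (b * c⁻¹) = b := by field_simp
      rwa [hcb] at this
    · have : b * (b * c⁻¹)⁻¹ ∈ B * locSub K P hP := Submodule.mul_mem_mul hb h
      rw [hB] at this
      have hcb : b * (b * c⁻¹)⁻¹ = c := by field_simp
      rwa [hcb] at this

/-- general: C ≤ A / (A / C) -/
theorem le_div_div {A C : Submodule R K} : C ≤ A / (A / C) := by
  intro c hc
  rw [Submodule.mem_div_iff_forall_mul_mem]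
  intro y hy
  rw [Submodule.mem_div_iff_forall_mul_mem] at hy
  rw [mul_comm]
  exact hy c hc

theorem sdivAntitone {A B C : Submodule R K} (h : B ≤ C) : A / C ≤ A / B := by
  intro y hy
  rw [Submodule.mem_div_iff_forall_mul_mem] at hy ⊢
  exact fun z hz => hy z (h hz)

theorem div_div_div {A B : Submodule R K} : A / (A / (A / B)) = A / B :=
  le_antisymm (sdivAntitone le_div_div) le_div_div

end Lemmas4
section Lemmas5

variable {R K : Type*} [CommRing R] [IsDomain R] [Field K] [Algebra R K] [IsFractionRing R K]

open Submodule

theorem zero_smulK (I : Submodule R K) : (0 : K) • I = ⊥ := by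
  ext z
  simp only [Submodule.mem_bot]
  constructor
  · rintro ⟨y, _, rfl⟩
    simp
  · rintro rfl
    exact ⟨0, I.zero_mem, by simp⟩

theorem smul_mulK (x : K) (I J : Submodule R K) : (x • I) * J = x • (I * J) := by
  rw [← Submodule.span_singleton_mul, ← Submodule.span_singleton_mul, mul_assoc]

theorem div_smulK {x : K} (hx : x ≠ 0) (A B : Submodule R K) :
    A / (x • B) = x⁻¹ • (A / B) := by
  ext z
  rw [Submodule.mem_div_iff_forall_mul_mem, mem_smulK]
  constructor
  · intro h
    refine ⟨x * z, ?_, by field_simp⟩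
    rw [Submodule.mem_div_iff_forall_mul_mem]
    intro b hb
    have := h (x * b) ⟨b, hb, rfl⟩
    rwa [show z * (x * b) = x * z * b by ring] at this
  · rintro ⟨y, hy, rfl⟩
    rintro w ⟨b, hb, rfl⟩
    rw [Submodule.mem_div_iff_forall_mul_mem] at hy
    have := hy b hb
    have hxb : x⁻¹ * y * (x * b) = y * b := by
      field_simp
    show x⁻¹ * y * (x * b) ∈ A
    rwa [hxb]

theorem vOp_extensive {P : Ideal R} (hP : P.IsPrime) (I : Submodule R K) : I ≤ vOp K P hP I :=
  le_trans le_mul_locSub le_div_div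

theorem vOp_mono {P : Ideal R} (hP : P.IsPrime) {I J : Submodule R K} (h : I ≤ J) :
    vOp K P hP I ≤ vOp K P hP J :=
  sdivAntitone (sdivAntitone (mul_le_mul_left h _))

theorem div_mul_locSub {P : Ideal R} (hP : P.IsPrime) (C : Submodule R K) :
    (locSub K P hP / C) * locSub K P hP = locSub K P hP / C := by
  refine le_antisymm (Submodule.mul_le.2 fun z hz r hr => ?_) le_mul_locSub
  rw [Submodule.mem_div_iff_forall_mul_mem] at hz ⊢
  intro c hc
  rw [show z * r * c = r * (z * c) by ring]
  exact mul_mem_locSub hr (hz c hc)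

theorem vOp_mul_locSub {P : Ideal R} (hP : P.IsPrime) (I : Submodule R K) :
    vOp K P hP I * locSub K P hP = vOp K P hP I :=
  div_mul_locSub hP _

theorem vOp_idem {P : Ideal R} (hP : P.IsPrime) (I : Submodule R K) :
    vOp K P hP (vOp K P hP I) = vOp K P hP I := by
  rw [vOp, vOp_mul_locSub, vOp, div_div_div]

theorem vOp_smul {P : Ideal R} (hP : P.IsPrime) {x : K} (hx : x ≠ 0) (I : Submodule R K) :
    vOp K P hP (x • I) = x • vOp K P hP I := by
  rw [vOp, vOp, smul_mulK, div_smulK hx, div_smulK (inv_ne_zero hx), inv_inv]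

theorem vOp_inf (hR : IsPruferDomain (R := R) K) {P : Ideal R} (hP : P.IsPrime)
    (I J : Submodule R K) :
    vOp K P hP I ⊓ vOp K P hP J ≤ vOp K P hP (I ⊓ J) := by
  rcases total_locSub hR hP (mul_locSub_idem (I := I)) (mul_locSub_idem (I := J)) with h | h
  · have : (I ⊓ J) * locSub K P hP = I * locSub K P hP := by
      rw [inf_mul_locSub, inf_eq_left.2 h]
    conv_rhs => rw [vOp, this]
    exact inf_le_left
  · have : (I ⊓ J) * locSub K P hP = J * locSub K P hP := by
      rw [inf_mul_locSub, inf_eq_right.2 h]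
    conv_rhs => rw [vOp, this]
    exact inf_le_right

end Lemmas5
section Lemmas6

variable {R K : Type*} [CommRing R] [IsDomain R] [Field K] [Algebra R K] [IsFractionRing R K]
variable {f : Submodule R K → Submodule R K}

open Submodule

theorem mem_idealToK {L : Ideal R} {y : K} :
    y ∈ idealToK K L ↔ ∃ r ∈ L, algebraMap R K r = y := by
  simp [idealToK, Submodule.mem_map, Algebra.linearMap_apply]

theorem one_memK : (1 : K) ∈ (1 : Submodule R K) := by
  rw [Submodule.one_eq_range]
  exact ⟨1, by simp [Algebra.linearMap_apply]⟩

theorem f_bot (hf : IsSemistarOperation K f) : f ⊥ = ⊥ := by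
  have := hf.2.2.2 0 ⊥
  rwa [zero_smulK, zero_smulK] at this

/-- The conductor ideal `(M : x) ∩ R`. -/
def condI (M : Submodule R K) (x : K) : Ideal R :=
  Submodule.comap (LinearMap.toSpanSingleton R K x) M

theorem mem_condI {M : Submodule R K} {x : K} {r : R} :
    r ∈ condI M x ↔ algebraMap R K r * x ∈ M := by
  simp [condI, LinearMap.toSpanSingleton_apply, Algebra.smul_def]

theorem idealToK_condI {M : Submodule R K} {x : K} (hx : x ≠ 0) :
    idealToK K (condI M x) = (x⁻¹ • M) ⊓ 1 := by
  ext z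
  constructor
  · intro hz
    obtain ⟨r, hr, rfl⟩ := mem_idealToK.1 hz
    rw [mem_condI] at hr
    refine ⟨⟨algebraMap R K r * x, hr, by show x⁻¹ * (algebraMap R K r * x) = _; rw [mul_comm, mul_assoc, mul_inv_cancel₀ hx, mul_one]⟩, ?_⟩
    rw [Submodule.one_eq_range]
    exact ⟨r, rfl⟩
  · rintro ⟨hz1, hz2⟩
    rw [Submodule.one_eq_range] at hz2
    obtain ⟨r, rfl⟩ := hz2
    refine mem_idealToK.2 ⟨r, mem_condI.2 ?_, rfl⟩
    obtain ⟨y, hy, hxy⟩ := hz1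
    have hxy' : x⁻¹ * y = algebraMap R K r := hxy
    have : y = algebraMap R K r * x := by
      rw [← hxy']; field_simp
    rwa [← this]

/-- If `x ∈ f M` then the conductor is dense. -/
theorem dense_of_mem (hf : IsSemistarOperation K f) (hstable : IsStableOperation K f)
    {M : Submodule R K} {x : K} (hx : x ∈ f M) :
    (1 : K) ∈ f (idealToK K (condI M x)) := by
  by_cases hx0 : x = 0
  · subst hx0
    have : condI M (0 : K) = ⊤ := by
      ext r; simp [mem_condI, M.zero_mem]
    rw [this]
    have h1 : idealToK K (⊤ : Ideal R) = 1 := by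
      ext z
      rw [mem_idealToK, Submodule.one_eq_range]
      simp
    rw [h1]
    exact hf.1 1 one_memK
  · rw [idealToK_condI hx0, hstable, hf.2.2.2]
    refine ⟨⟨x, hx, by show x⁻¹ * x = (1 : K); exact inv_mul_cancel₀ hx0⟩, hf.1 1 one_memK⟩

/-- If a dense ideal multiplies `x` into `M`, then `x ∈ f M`. -/
theorem mem_of_dense (hf : IsSemistarOperation K f) {M : Submodule R K} {x : K}
    {E : Ideal R} (hE : (1 : K) ∈ f (idealToK K E))
    (h : ∀ e ∈ E, algebraMap R K e * x ∈ M) : x ∈ f M := by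
  have h1 : x • idealToK K E ≤ M := by
    rintro z ⟨y, hy, rfl⟩
    obtain ⟨e, he, rfl⟩ := mem_idealToK.1 hy
    rw [show (DistribSMul.toLinearMap R K x) (algebraMap R K e)
      = algebraMap R K e * x from mul_comm _ _]
    exact h e he
  have h2 : x ∈ x • f (idealToK K E) := by
    have := Submodule.smul_mem_pointwise_smul _ x _ hE
    rwa [smul_eq_mul, mul_one] at this
  rw [← hf.2.2.2] at h2
  exact hf.2.2.1 _ _ h1 h2

theorem dense_mono (hf : IsSemistarOperation K f) {E E' : Ideal R} (h : E ≤ E')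
    (hE : (1 : K) ∈ f (idealToK K E)) : (1 : K) ∈ f (idealToK K E') :=
  hf.2.2.1 _ _ (Submodule.map_mono h) hE

theorem dense_mul (hf : IsSemistarOperation K f) {E E' : Ideal R}
    (hE : (1 : K) ∈ f (idealToK K E)) (hE' : (1 : K) ∈ f (idealToK K E')) :
    (1 : K) ∈ f (idealToK K (E * E')) := by
  have key : idealToK K E ≤ f (idealToK K (E * E')) := by
    intro z hz
    obtain ⟨e, he, rfl⟩ := mem_idealToK.1 hz
    refine mem_of_dense hf hE' (fun t ht => ?_)
    exact mem_idealToK.2 ⟨t * e, mul_comm e t ▸ Ideal.mul_mem_mul he ht, by rw [map_mul]⟩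
  have := hf.2.2.1 _ _ key
  rw [hf.2.1] at this
  exact this (hE)

theorem dense_pow (hf : IsSemistarOperation K f) {E : Ideal R}
    (hE : (1 : K) ∈ f (idealToK K E)) (n : ℕ) : (1 : K) ∈ f (idealToK K (E ^ n)) := by
  induction n with
  | zero =>
    have h1 : idealToK K ((E : Ideal R) ^ 0) = 1 := by
      rw [pow_zero, Ideal.one_eq_top]
      ext z
      rw [mem_idealToK, Submodule.one_eq_range]
      simp
    rw [h1]
    exact hf.1 1 one_memK
  | succ n ih =>
    rw [pow_succ]
    exact dense_mul hf ih hE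

end Lemmas6
section Lemmas7

variable {R K : Type*} [CommRing R] [IsDomain R] [Field K] [Algebra R K] [IsFractionRing R K]
variable {f : Submodule R K → Submodule R K}

open Submodule

theorem one_not_mem_idealToK {L : Ideal R} (hL : L ≠ ⊤) : (1 : K) ∉ idealToK K L := by
  intro h
  obtain ⟨r, hr, hr1⟩ := mem_idealToK.1 h
  have : r = 1 := IsFractionRing.injective R K (by rw [hr1, map_one])
  exact hL (Ideal.eq_top_iff_one _ |>.2 (this ▸ hr))

theorem f_le_mul_locSub (hf : IsSemistarOperation K f) (hstable : IsStableOperation K f)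
    {Q : Ideal R} (hQ : Q ∈ QSpec K f) (I : Submodule R K) :
    f I ≤ I * locSub K Q hQ.1 := by
  intro x hx
  have hdense := dense_of_mem hf hstable hx
  by_cases hDQ : condI I x ≤ Q
  · exfalso
    have h1 : (1 : K) ∈ f (idealToK K Q) := dense_mono hf hDQ hdense
    have : (1 : K) ∈ f (idealToK K Q) ⊓ 1 := ⟨h1, one_memK⟩
    rw [hQ.2] at this
    exact one_not_mem_idealToK hQ.1.ne_top this
  · rw [SetLike.not_le_iff_exists] at hDQ
    obtain ⟨s, hs, hsQ⟩ := hDQ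
    exact mem_mul_locSub.2 ⟨s, hsQ, mem_condI.1 hs⟩

theorem f_le_vOp (hR : IsPruferDomain (R := R) K) (hf : IsSemistarOperation K f)
    (hstable : IsStableOperation K f)
    {P : Ideal R} (hP : P ∈ PsSpec K f) (I : Submodule R K) :
    f I ≤ vOp K P hP.1 I := by
  obtain ⟨hPp, hPd, L, hLprim, hLrad, hLf⟩ := hP
  intro x hx
  rw [vOp, Submodule.mem_div_iff_forall_mul_mem]
  intro y hy
  set A := locSub K P hPp with hA
  by_contra hz
  set z := x * y with hzdef
  have hz0 : z ≠ 0 := fun h0 => hz (h0 ▸ A.zero_mem)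
  -- z⁻¹ ∈ A with numerator in P
  have hzinv : z⁻¹ ∈ A := by
    rcases valuation_locSub hR hPp z hz0 with h | h
    · exact absurd h hz
    · exact h
  obtain ⟨a, s, hs, hzs⟩ := mem_locSub.1 hzinv
  have hsK : algebraMap R K s ≠ 0 := algebraMap_ne_zero hPp hs
  have ha0 : a ≠ 0 := by
    intro h0
    subst h0
    rw [map_zero] at hzs
    exact mul_ne_zero (inv_ne_zero hz0) hsK hzs
  have hzP : z * algebraMap R K a = algebraMap R K s := by
    rw [← hzs]
    field_simp
  have haP : a ∈ P := by
    by_contra haP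
    exact hz (mem_locSub.2 ⟨s, a, haP, hzP⟩)
  -- the conductor of z into A
  set D := condI A z with hD
  have hDdense : (1 : K) ∈ f (idealToK K D) := by
    refine dense_mono hf ?_ (dense_of_mem hf hstable hx)
    intro r hr
    rw [mem_condI] at hr ⊢
    have h1 : algebraMap R K r * x ∈ I * A := le_mul_locSub hr
    have h2 := Submodule.mem_div_iff_forall_mul_mem.1 hy _ h1
    rwa [show y * (algebraMap R K r * x) = algebraMap R K r * z by rw [hzdef]; ring] at h2
  have hDP : D ≤ P := by
    intro r hr
    rw [mem_condI] at hr
    by_contra hrP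
    refine hz (?_ : z ∈ A)
    have := mul_mem_locSub hr (inv_algebraMap_mem_locSub hPp hrP)
    rwa [show algebraMap R K r * z * (algebraMap R K r)⁻¹ = z by
      field_simp [algebraMap_ne_zero hPp hrP]] at this
  -- choose n with a^n ∈ L
  obtain ⟨n, han⟩ : ∃ n, a ^ n ∈ L := hLrad ▸ haP
  -- D^n * z^n ⊆ A
  have hpow : ∀ m : ℕ, ∀ d ∈ D ^ m, algebraMap R K d * z ^ m ∈ A := by
    intro m
    induction m with
    | zero => intro d _; rw [pow_zero, mul_one]; exact algebraMap_mem_locSub d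
    | succ m ih =>
      intro d hd
      rw [pow_succ] at hd
      refine Submodule.mul_induction_on hd ?_ ?_
      · intro e he g hg
        have h1 := ih e he
        have h2 : algebraMap R K g * z ∈ A := mem_condI.1 hg
        have := mul_mem_locSub h1 h2
        rwa [show algebraMap R K e * z ^ m * (algebraMap R K g * z)
          = algebraMap R K (e * g) * z ^ (m + 1) by rw [map_mul]; ring] at this
      · intro u v hu hv
        rw [map_add, add_mul]
        exact A.add_mem hu hv
  -- D^n ≤ L
  have hDnL : D ^ n ≤ L := by
    intro d hd
    have h1 : algebraMap R K d * z ^ n ∈ A := hpow n d hd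
    have hzn : z ^ n * algebraMap R K (a ^ n) = algebraMap R K (s ^ n) := by
      rw [map_pow, map_pow, ← mul_pow, hzP]
    have hmem : algebraMap R K d ∈ idealToK K L * A := by
      have hL1 : algebraMap R K (a ^ n) ∈ idealToK K L := mem_idealToK.2 ⟨a ^ n, han, rfl⟩
      have hA1 : (algebraMap R K d * z ^ n) * (algebraMap R K (s ^ n))⁻¹ ∈ A :=
        mul_mem_locSub h1 (inv_algebraMap_mem_locSub hPp (fun h => hs (hPp.mem_of_pow_mem n h)))
      have := Submodule.mul_mem_mul hL1 hA1
      rwa [show algebraMap R K (a ^ n) * (algebraMap R K d * z ^ n *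
          (algebraMap R K (s ^ n))⁻¹) = algebraMap R K d by
        rw [← hzn, map_pow]
        have haK : algebraMap R K a ≠ 0 := fun h =>
          ha0 (IsFractionRing.injective R K (by simpa using h))
        have hzn0 : z ^ n ≠ 0 := pow_ne_zero _ hz0
        field_simp] at this
    obtain ⟨t, ht, htd⟩ := mem_mul_locSub.1 hmem
    rw [← map_mul] at htd
    obtain ⟨l, hl, hld⟩ := mem_idealToK.1 htd
    have : l = t * d := IsFractionRing.injective R K hld
    have htdL : d * t ∈ L := by rwa [mul_comm d t, ← this]
    rcases (Ideal.isPrimary_iff.1 hLprim).2 htdL with h | h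
    · exact h
    · exact absurd (hLrad ▸ h) ht
  -- contradiction: L is dense but L^⋆ ∩ R = L ≠ R
  have hLdense : (1 : K) ∈ f (idealToK K L) :=
    dense_mono hf hDnL (dense_pow hf hDdense n)
  have : (1 : K) ∈ f (idealToK K L) ⊓ 1 := ⟨hLdense, one_memK⟩
  rw [hLf] at this
  refine one_not_mem_idealToK (fun hLtop => ?_) this
  rw [← hLrad, hLtop, Ideal.radical_top] at hPp
  exact hPp.ne_top rfl

end Lemmas7
section Lemmas8

variable {R K : Type*} [CommRing R] [IsDomain R] [Field K] [Algebra R K] [IsFractionRing R K]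

open Submodule

theorem mem_smulK' {x z : K} (hx : x ≠ 0) {C : Submodule R K} :
    z ∈ x • C ↔ x⁻¹ * z ∈ C := by
  rw [mem_smulK]
  constructor
  · rintro ⟨y, hy, rfl⟩
    rwa [show x⁻¹ * (x * y) = y by field_simp]
  · intro h
    exact ⟨x⁻¹ * z, h, by field_simp⟩

theorem smul_infK {x : K} (hx : x ≠ 0) (A B : Submodule R K) :
    x • (A ⊓ B) = x • A ⊓ x • B := by
  ext z
  simp [mem_smulK' hx, Submodule.mem_inf]

theorem smul_iInfK {x : K} (hx : x ≠ 0) {ι : Sort*} (C : ι → Submodule R K) :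
    x • (⨅ i, C i) = ⨅ i, x • C i := by
  ext z
  simp [mem_smulK' hx, Submodule.mem_iInf]

end Lemmas8

/-- Let `R` be a Prüfer domain and `⋆` a stable semistar operation, with normalized stable
version `⋆̃`. Then `⋆̃` is a stable semistar operation, and `⋆ ≤ ⋆̃`. -/
theorem normStable_isSemistar_and_le {R K : Type*} [CommRing R] [IsDomain R] [Field K] [Algebra R K]
    [IsFractionRing R K]
    (hR : IsPruferDomain (R := R) K)
    (f : Submodule R K → Submodule R K) (hf : IsSemistarOperation K f)
    (hstable : IsStableOperation K f) :
    IsSemistarOperation K (normStable K f) ∧ IsStableOperation K (normStable K f) ∧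
      ∀ I : Submodule R K, f I ≤ normStable K f I := by
  have hext : ∀ I : Submodule R K, I ≤ normStable K f I := fun I =>
    le_inf (le_iInf fun P => le_mul_locSub) (le_iInf fun P => vOp_extensive P.2.1 I)
  have hmono : ∀ I J : Submodule R K, I ≤ J → normStable K f I ≤ normStable K f J := by
    intro I J h
    exact inf_le_inf (iInf_mono fun P => mul_le_mul_left h _)
      (iInf_mono fun P => vOp_mono P.2.1 h)
  have hleQ : ∀ (I : Submodule R K) (P : QSpec K f),
      normStable K f I ≤ I * locSub K P.1 P.2.1 := fun I P =>
    inf_le_left.trans (iInf_le _ P)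
  have hleP : ∀ (I : Submodule R K) (P : PsSpec K f),
      normStable K f I ≤ vOp K P.1 P.2.1 I := fun I P =>
    inf_le_right.trans (iInf_le _ P)
  have hidem : ∀ I : Submodule R K, normStable K f (normStable K f I) = normStable K f I := by
    intro I
    refine le_antisymm (le_inf (le_iInf fun P => ?_) (le_iInf fun P => ?_)) (hext _)
    · calc normStable K f (normStable K f I) ≤ normStable K f I * locSub K P.1 P.2.1 := hleQ _ P
        _ ≤ (I * locSub K P.1 P.2.1) * locSub K P.1 P.2.1 :=
          mul_le_mul_left (hleQ I P) _
        _ = I * locSub K P.1 P.2.1 := mul_locSub_idem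
    · calc normStable K f (normStable K f I) ≤ vOp K P.1 P.2.1 (normStable K f I) := hleP _ P
        _ ≤ vOp K P.1 P.2.1 (vOp K P.1 P.2.1 I) := vOp_mono P.2.1 (hleP I P)
        _ = vOp K P.1 P.2.1 I := vOp_idem P.2.1 I
  have hbotQ : (⊥ : Ideal R) ∈ QSpec K f := by
    refine ⟨Ideal.bot_prime, ?_⟩
    have h1 : idealToK K (⊥ : Ideal R) = ⊥ := Submodule.map_bot _
    rw [h1, f_bot hf, bot_inf_eq]
  have hbot : normStable K f ⊥ = ⊥ := by
    refine le_bot_iff.1 ?_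
    have := hleQ ⊥ ⟨⊥, hbotQ⟩
    rwa [Submodule.bot_mul] at this
  have hsmul : ∀ (x : K) (I : Submodule R K),
      normStable K f (x • I) = x • normStable K f I := by
    intro x I
    by_cases hx : x = 0
    · subst hx
      rw [zero_smulK, zero_smulK, hbot]
    · rw [normStable, normStable, smul_infK hx, smul_iInfK hx, smul_iInfK hx]
      congr 1
      · exact iInf_congr fun P => smul_mulK x I _
      · exact iInf_congr fun P => vOp_smul P.2.1 hx I
  refine ⟨⟨hext, hidem, hmono, hsmul⟩, ?_, ?_⟩
  · intro I J
    refine le_antisymm (le_inf (hmono _ _ inf_le_left) (hmono _ _ inf_le_right))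
      (le_inf (le_iInf fun P => ?_) (le_iInf fun P => ?_))
    · rw [inf_mul_locSub]
      exact inf_le_inf (hleQ I P) (hleQ J P)
    · exact (inf_le_inf (hleP I P) (hleP J P)).trans (vOp_inf hR P.2.1 I J)
  · intro I
    exact le_inf (le_iInf fun P => f_le_mul_locSub hf hstable P.2 I)
      (le_iInf fun P => f_le_vOp hR hf hstable P.2 I)
end
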